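/- If the value set V contains two distinct values a ≠ b, then the queue specification T_queue is not anagram-agnostic: the sequences τ1 = enq(a)·enq(b) and τ2 = enq(b)·enq(a) are anagrams, both belong to T_queue, yet τ1·deq(a) ∈ T_queue while τ2·deq(a) ∉ T_queue, so τ1 ≁ τ2. -/

import Mathlib

/-- τ1 ∼ τ2 : the two sequences admit exactly the same legal continuations. -/
def SpecEquiv {A : Type} (T : Set (List A)) (τ1 τ2 : List A) : Prop :=
  ∀ τ' : List A, τ1 ++ τ' ∈ T ↔ τ2 ++ τ' ∈ T

/-- A specification is anagram-agnostic if any two of its members that are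
permutations of one another (anagrams) are equivalent. -/
def AnagramAgnostic {A : Type} (T : Set (List A)) : Prop :=
  ∀ τ1 ∈ T, ∀ τ2 ∈ T, τ1.Perm τ2 → SpecEquiv T τ1 τ2

/-- Queue symbols: `enq v`, `peek v` (`v ∈ V`), `deq (some v)` (`v ∈ V`) and
the empty dequeue `deq none` (i.e. `deq(ε)`). -/
inductive QueueOp (V : Type) : Type
  | enq (v : V) : QueueOp V
  | deq (v : Option V) : QueueOp V
  | peek (v : V) : QueueOp V
deriving DecidableEq

/-- Execution of queue sequences: `QueueExec q w q'` holds when `w` can be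
legally executed from the FIFO queue `q` (front at the head), ending in `q'`.
`enq v` appends `v` at the back; `deq (some v)` (resp. `peek v`) is enabled
only when the front is `v` and removes it (resp. leaves the queue unchanged);
`deq none` is enabled only when the queue is empty. -/
inductive QueueExec {V : Type} : List V → List (QueueOp V) → List V → Prop
  | nil (q : List V) : QueueExec q [] q
  | enq {q q' : List V} {w : List (QueueOp V)} (v : V) :
      QueueExec (q ++ [v]) w q' → QueueExec q (QueueOp.enq v :: w) q'
  | deq {q q' : List V} {w : List (QueueOp V)} (v : V) :
      QueueExec q w q' → QueueExec (v :: q) (QueueOp.deq (some v) :: w) q'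
  | peek {q q' : List V} {w : List (QueueOp V)} (v : V) :
      QueueExec (v :: q) w q' → QueueExec (v :: q) (QueueOp.peek v :: w) q'
  | deqEmpty {q' : List V} {w : List (QueueOp V)} :
      QueueExec [] w q' → QueueExec [] (QueueOp.deq none :: w) q'

/-- The queue specification: sequences executable from the empty queue. -/
def TQueue (V : Type) : Set (List (QueueOp V)) :=
  {w | ∃ q : List V, QueueExec [] w q}

/-! Queue executions compose along concatenation, and a block of enqueues run from the
empty queue leaves exactly the enqueued values, in order. Hence `deq a` is enabled after
`enq a · enq b` but not after `enq b · enq a`, a continuation that separates two anagrams. -/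

section QueueExec

variable {V : Type}

theorem queueExec_append_iff {q q'' : List V} {w₁ w₂ : List (QueueOp V)} :
    QueueExec q (w₁ ++ w₂) q'' ↔ ∃ q', QueueExec q w₁ q' ∧ QueueExec q' w₂ q'' := by
  induction w₁ generalizing q with
  | nil => exact ⟨fun h => ⟨q, .nil q, h⟩, fun ⟨_, .nil _, h⟩ => h⟩
  | cons op w₁ ih =>
    constructor
    · intro h
      cases h with
      | enq v h => obtain ⟨q', h₁, h₂⟩ := ih.1 h; exact ⟨q', .enq v h₁, h₂⟩
      | deq v h => obtain ⟨q', h₁, h₂⟩ := ih.1 h; exact ⟨q', .deq v h₁, h₂⟩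
      | peek v h => obtain ⟨q', h₁, h₂⟩ := ih.1 h; exact ⟨q', .peek v h₁, h₂⟩
      | deqEmpty h => obtain ⟨q', h₁, h₂⟩ := ih.1 h; exact ⟨q', .deqEmpty h₁, h₂⟩
    · rintro ⟨q', h₁, h₂⟩
      cases h₁ with
      | enq v h₁ => exact .enq v (ih.2 ⟨q', h₁, h₂⟩)
      | deq v h₁ => exact .deq v (ih.2 ⟨q', h₁, h₂⟩)
      | peek v h₁ => exact .peek v (ih.2 ⟨q', h₁, h₂⟩)
      | deqEmpty h₁ => exact .deqEmpty (ih.2 ⟨q', h₁, h₂⟩)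

theorem queueExec_map_enq_iff {q q' : List V} (vs : List V) :
    QueueExec q (vs.map QueueOp.enq) q' ↔ q' = q ++ vs := by
  induction vs generalizing q with
  | nil =>
    rw [List.append_nil]
    exact ⟨fun (.nil _) => rfl, fun h => h ▸ .nil q⟩
  | cons v vs ih =>
    rw [List.map_cons, List.append_cons]
    exact ⟨fun (.enq _ h) => ih.1 h, fun h => .enq v (ih.2 h)⟩

theorem queueExec_deq_singleton_iff {q q' : List V} (v : V) :
    QueueExec q [QueueOp.deq (some v)] q' ↔ q = v :: q' :=
  ⟨fun (.deq _ (.nil _)) => rfl, fun h => h ▸ .deq v (.nil q')⟩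

theorem map_enq_mem_TQueue (vs : List V) : vs.map QueueOp.enq ∈ TQueue V :=
  ⟨vs, (queueExec_map_enq_iff vs).2 rfl⟩

theorem map_enq_append_deq_mem_TQueue_iff (vs : List V) (v : V) :
    vs.map QueueOp.enq ++ [QueueOp.deq (some v)] ∈ TQueue V ↔ vs.head? = some v := by
  simp only [TQueue, Set.mem_ofPred_eq, queueExec_append_iff, queueExec_map_enq_iff,
    queueExec_deq_singleton_iff, List.nil_append]
  constructor
  · rintro ⟨_, _, rfl, rfl⟩
    rfl
  · intro h
    obtain ⟨vs', rfl⟩ : ∃ vs', vs = v :: vs' := List.head?_eq_some_iff.1 h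
    exact ⟨vs', _, rfl, rfl⟩

end QueueExec

theorem stmt11 {V : Type} (a b : V) (hab : a ≠ b) :
    [QueueOp.enq a, QueueOp.enq b].Perm [QueueOp.enq b, QueueOp.enq a] ∧
    [QueueOp.enq a, QueueOp.enq b] ∈ TQueue V ∧
    [QueueOp.enq b, QueueOp.enq a] ∈ TQueue V ∧
    [QueueOp.enq a, QueueOp.enq b] ++ [QueueOp.deq (some a)] ∈ TQueue V ∧
    [QueueOp.enq b, QueueOp.enq a] ++ [QueueOp.deq (some a)] ∉ TQueue V ∧
    ¬ SpecEquiv (TQueue V) [QueueOp.enq a, QueueOp.enq b]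
        [QueueOp.enq b, QueueOp.enq a] ∧
    ¬ AnagramAgnostic (TQueue V) := by
  have hab_mem : [QueueOp.enq a, QueueOp.enq b] ∈ TQueue V := map_enq_mem_TQueue [a, b]
  have hba_mem : [QueueOp.enq b, QueueOp.enq a] ∈ TQueue V := map_enq_mem_TQueue [b, a]
  have hperm : [QueueOp.enq a, QueueOp.enq b].Perm [QueueOp.enq b, QueueOp.enq a] :=
    List.Perm.swap _ _ _
  have hab_deq : [QueueOp.enq a, QueueOp.enq b] ++ [QueueOp.deq (some a)] ∈ TQueue V :=
    (map_enq_append_deq_mem_TQueue_iff [a, b] a).2 rfl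
  have hba_deq : [QueueOp.enq b, QueueOp.enq a] ++ [QueueOp.deq (some a)] ∉ TQueue V :=
    fun h => hab (Option.some_injective _ ((map_enq_append_deq_mem_TQueue_iff [b, a] a).1 h)).symm
  have hnequiv : ¬ SpecEquiv (TQueue V) [QueueOp.enq a, QueueOp.enq b]
      [QueueOp.enq b, QueueOp.enq a] :=
    fun h => hba_deq ((h _).1 hab_deq)
  exact ⟨hperm, hab_mem, hba_mem, hab_deq, hba_deq, hnequiv,
    fun h => hnequiv (h _ hab_mem _ hba_mem hperm)⟩
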